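/- arXiv:1112.0641 — 2 statements merged into one kernel-verified Lean document; each statement's English description precedes it below -/
import Mathlib

section
/- Let ê₁ and ê₂ be the normal extensions of e₁ and e₂ to V₀, and define κ₁(ξ) := κ₁/(1−ξc₂) + ξ(∇_s c₁·e₂)/((1−ξc₁)(1−ξc₂)) and κ₂(ξ) := κ₂/(1−ξc₁) − ξ(∇_s c₂·e₁)/((1−ξc₁)(1−ξc₂)). Then at every point Φ(u,v,ξ) ∈ V₀: Dê₁ = κ₁(ξ) e₂⊗e₁ + κ₂(ξ) e₂⊗e₂ + (c₁/(1−ξc₁)) ν⊗e₁ and Dê₂ = −κ₁(ξ) e₁⊗e₁ − κ₂(ξ) e₁⊗e₂ + (c₂/(1−ξc₂)) ν⊗e₂. -/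
open MeasureTheory Real Filter

noncomputable section

abbrev V3 : Type := Fin 3 → ℝ

/-- partial derivative in `u` of a field on `ℝ²`. -/
def pu {X : Type} [NormedAddCommGroup X] [NormedSpace ℝ X] (f : ℝ × ℝ → X) (p : ℝ × ℝ) : X :=
  fderiv ℝ f p (1, 0)

/-- partial derivative in `v` of a field on `ℝ²`. -/
def pv {X : Type} [NormedAddCommGroup X] [NormedSpace ℝ X] (f : ℝ × ℝ → X) (p : ℝ × ℝ) : X :=
  fderiv ℝ f p (0, 1)

/-- Euclidean dot product on `ℝ³`. -/
def dot3 (u v : V3) : ℝ := ∑ i, u i * v i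

/-- cross product on `ℝ³`. -/
def cross3 (u v : V3) : V3 :=
  ![u 1 * v 2 - u 2 * v 1, u 2 * v 0 - u 0 * v 2, u 0 * v 1 - u 1 * v 0]

/-- tensor (outer) product `u ⊗ v`. -/
def tensor3 (u v : V3) : Matrix (Fin 3) (Fin 3) ℝ := Matrix.of fun i j => u i * v j

def Efun (φ : ℝ × ℝ → V3) (p : ℝ × ℝ) : ℝ := dot3 (pu φ p) (pu φ p)
def Gfun (φ : ℝ × ℝ → V3) (p : ℝ × ℝ) : ℝ := dot3 (pv φ p) (pv φ p)
def e1 (φ : ℝ × ℝ → V3) (p : ℝ × ℝ) : V3 := (Real.sqrt (Efun φ p))⁻¹ • pu φ p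
def e2 (φ : ℝ × ℝ → V3) (p : ℝ × ℝ) : V3 := (Real.sqrt (Gfun φ p))⁻¹ • pv φ p
def nuv (φ : ℝ × ℝ → V3) (p : ℝ × ℝ) : V3 := cross3 (e1 φ p) (e2 φ p)

/-- surface gradient of a scalar field. -/
def gradS (φ : ℝ × ℝ → V3) (f : ℝ × ℝ → ℝ) (p : ℝ × ℝ) : V3 :=
  (pu f p / Real.sqrt (Efun φ p)) • e1 φ p + (pv f p / Real.sqrt (Gfun φ p)) • e2 φ p

/-- surface gradient of a vector field. -/
def gradSv (φ : ℝ × ℝ → V3) (w : ℝ × ℝ → V3) (p : ℝ × ℝ) : Matrix (Fin 3) (Fin 3) ℝ :=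
  (Real.sqrt (Efun φ p))⁻¹ • tensor3 (pu w p) (e1 φ p) +
    (Real.sqrt (Gfun φ p))⁻¹ • tensor3 (pv w p) (e2 φ p)

/-- surface divergence. -/
def divS (φ : ℝ × ℝ → V3) (w : ℝ × ℝ → V3) (p : ℝ × ℝ) : ℝ := Matrix.trace (gradSv φ w p)

/-- the axial vector `c` of an antisymmetric matrix `B`, i.e. the unique `c` with `c × a = B a`. -/
def axial (B : Matrix (Fin 3) (Fin 3) ℝ) : V3 := ![B 2 1, B 0 2, B 1 0]

/-- surface curl: the unique vector with `(curlS w) × a = (∇s w − (∇s w)ᵀ) a` for all `a`. -/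
def curlS (φ : ℝ × ℝ → V3) (w : ℝ × ℝ → V3) (p : ℝ × ℝ) : V3 :=
  axial (gradSv φ w p - (gradSv φ w p).transpose)

def ndir (φ : ℝ × ℝ → V3) (α : ℝ × ℝ → ℝ) (p : ℝ × ℝ) : V3 :=
  Real.cos (α p) • e1 φ p + Real.sin (α p) • e2 φ p
def tdir (φ : ℝ × ℝ → V3) (α : ℝ × ℝ → ℝ) (p : ℝ × ℝ) : V3 := cross3 (nuv φ p) (ndir φ α p)

def kap1 (φ : ℝ × ℝ → V3) (p : ℝ × ℝ) : ℝ :=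
  -(pv (Efun φ) p) / (2 * Efun φ p * Real.sqrt (Gfun φ p))
def kap2 (φ : ℝ × ℝ → V3) (p : ℝ × ℝ) : ℝ :=
  pu (Gfun φ) p / (2 * Gfun φ p * Real.sqrt (Efun φ p))

def cN (c₁ c₂ : ℝ × ℝ → ℝ) (α : ℝ × ℝ → ℝ) (p : ℝ × ℝ) : ℝ :=
  c₁ p * Real.cos (α p) ^ 2 + c₂ p * Real.sin (α p) ^ 2
def cT (c₁ c₂ : ℝ × ℝ → ℝ) (α : ℝ × ℝ → ℝ) (p : ℝ × ℝ) : ℝ :=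
  c₁ p * Real.sin (α p) ^ 2 + c₂ p * Real.cos (α p) ^ 2
def tauG (c₁ c₂ : ℝ × ℝ → ℝ) (α : ℝ × ℝ → ℝ) (p : ℝ × ℝ) : ℝ :=
  (c₁ p - c₂ p) * Real.sin (α p) * Real.cos (α p)
def kN (φ : ℝ × ℝ → V3) (α : ℝ × ℝ → ℝ) (p : ℝ × ℝ) : ℝ :=
  dot3 (gradS φ α p) (ndir φ α p) + kap1 φ p * Real.cos (α p) + kap2 φ p * Real.sin (α p)
def kT (φ : ℝ × ℝ → V3) (α : ℝ × ℝ → ℝ) (p : ℝ × ℝ) : ℝ :=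
  dot3 (gradS φ α p) (tdir φ α p) - kap1 φ p * Real.sin (α p) + kap2 φ p * Real.cos (α p)

/-- the curvature tensor `L = c₁ e₁⊗e₁ + c₂ e₂⊗e₂`. -/
def Lcurv (φ : ℝ × ℝ → V3) (c₁ c₂ : ℝ × ℝ → ℝ) (p : ℝ × ℝ) : Matrix (Fin 3) (Fin 3) ℝ :=
  c₁ p • tensor3 (e1 φ p) (e1 φ p) + c₂ p • tensor3 (e2 φ p) (e2 φ p)

/-- the shell parameterization. -/
def PhiMap (φ : ℝ × ℝ → V3) (x : (ℝ × ℝ) × ℝ) : V3 := φ x.1 + x.2 • nuv φ x.1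

/-- Cartesian partial derivative on `ℝ³`. -/
def pd (i : Fin 3) {X : Type} [NormedAddCommGroup X] [NormedSpace ℝ X] (f : V3 → X) (x : V3) : X :=
  fderiv ℝ f x (Pi.single i 1)

def div3 (w : V3 → V3) (x : V3) : ℝ := ∑ i, pd i w x i
def curl3 (w : V3 → V3) (x : V3) : V3 :=
  ![pd 1 w x 2 - pd 2 w x 1, pd 2 w x 0 - pd 0 w x 2, pd 0 w x 1 - pd 1 w x 0]
def grad3 (f : V3 → ℝ) (x : V3) : V3 := fun i => pd i f x
def Dmat3 (w : V3 → V3) (x : V3) : Matrix (Fin 3) (Fin 3) ℝ := Matrix.of fun i j => pd j w x i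



/-! ### Auxiliary algebra lemmas -/

lemma dot3_eq (u v : V3) : dot3 u v = u 0 * v 0 + u 1 * v 1 + u 2 * v 2 := by
  simp [dot3, Fin.sum_univ_three]

lemma onb_expand (u v a : V3) (hu : dot3 u u = 1) (hv : dot3 v v = 1) (huv : dot3 u v = 0) :
    a = dot3 u a • u + dot3 v a • v + dot3 (cross3 u v) a • cross3 u v := by
  rw [dot3_eq] at hu hv huv
  funext i
  fin_cases i <;>
    simp only [cross3, dot3_eq, Pi.add_apply, Pi.smul_apply, smul_eq_mul, Fin.mk_zero,
      Fin.mk_one, show (⟨2, by norm_num⟩ : Fin 3) = 2 from rfl,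
      Matrix.cons_val_zero, Matrix.cons_val_one, Matrix.head_cons, Matrix.cons_val_two,
      Matrix.tail_cons, Fin.isValue]
  · linear_combination ((a 0 * v 0 + a 1 * v 1 + a 2 * v 2) * v 0 - a 0 * (v 0^2 + v 1^2 + v 2^2)) * hu +
      ((u 0 * a 0 + u 1 * a 1 + u 2 * a 2) * u 0 - a 0) * hv +
      ((u 0 * v 0 + u 1 * v 1 + u 2 * v 2) * a 0 - (a 0 * v 0 + a 1 * v 1 + a 2 * v 2) * u 0 - (u 0 * a 0 + u 1 * a 1 + u 2 * a 2) * v 0) * huv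
  · linear_combination ((a 0 * v 0 + a 1 * v 1 + a 2 * v 2) * v 1 - a 1 * (v 0^2 + v 1^2 + v 2^2)) * hu +
      ((u 0 * a 0 + u 1 * a 1 + u 2 * a 2) * u 1 - a 1) * hv +
      ((u 0 * v 0 + u 1 * v 1 + u 2 * v 2) * a 1 - (a 0 * v 0 + a 1 * v 1 + a 2 * v 2) * u 1 - (u 0 * a 0 + u 1 * a 1 + u 2 * a 2) * v 1) * huv
  · linear_combination ((a 0 * v 0 + a 1 * v 1 + a 2 * v 2) * v 2 - a 2 * (v 0^2 + v 1^2 + v 2^2)) * hu +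
      ((u 0 * a 0 + u 1 * a 1 + u 2 * a 2) * u 2 - a 2) * hv +
      ((u 0 * v 0 + u 1 * v 1 + u 2 * v 2) * a 2 - (a 0 * v 0 + a 1 * v 1 + a 2 * v 2) * u 2 - (u 0 * a 0 + u 1 * a 1 + u 2 * a 2) * v 2) * huv

lemma dot3_cross_left (x y : V3) : dot3 (cross3 x y) x = 0 := by
  simp [dot3_eq, cross3]; ring
lemma dot3_cross_right (x y : V3) : dot3 (cross3 x y) y = 0 := by
  simp [dot3_eq, cross3]; ring
lemma cross3_smul_smul (c d : ℝ) (x y : V3) : cross3 (c • x) (d • y) = (c*d) • cross3 x y := by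
  funext i; fin_cases i <;> simp [cross3] <;> ring
lemma dot3_smul_left (c : ℝ) (x y : V3) : dot3 (c • x) y = c * dot3 x y := by
  simp [dot3_eq]; ring
lemma dot3_smul_right (c : ℝ) (x y : V3) : dot3 x (c • y) = c * dot3 x y := by
  simp [dot3_eq]; ring
lemma dot3_comm (x y : V3) : dot3 x y = dot3 y x := by simp [dot3_eq]; ring
lemma dot3_add_left (x y z : V3) : dot3 (x + y) z = dot3 x z + dot3 y z := by
  simp [dot3_eq]; ring

/-! ### Auxiliary calculus lemmas -/

section calcpart
variable {f g : ℝ × ℝ → V3} {c : ℝ × ℝ → ℝ} {p : ℝ × ℝ}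

lemma diff_comp_i (hf : DifferentiableAt ℝ f p) (i : Fin 3) :
    DifferentiableAt ℝ (fun q => f q i) p := differentiableAt_pi.mp hf i

lemma fderiv_comp_i (hf : DifferentiableAt ℝ f p) (i : Fin 3) (w : ℝ × ℝ) :
    fderiv ℝ (fun q => f q i) p w = fderiv ℝ f p w i := by
  rw [(hasFDerivAt_pi'.1 hf.hasFDerivAt i).fderiv]; rfl

lemma fderiv_dot3 (hf : DifferentiableAt ℝ f p) (hg : DifferentiableAt ℝ g p) (w : ℝ × ℝ) :
    fderiv ℝ (fun q => dot3 (f q) (g q)) p w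
      = dot3 (fderiv ℝ f p w) (g p) + dot3 (f p) (fderiv ℝ g p w) := by
  have h : (fun q => dot3 (f q) (g q)) = fun q => ∑ i : Fin 3, (fun j => fun q' => f q' j * g q' j) i q := rfl
  rw [h, fderiv_fun_sum (A := fun j q' => f q' j * g q' j) (fun i _ => ((diff_comp_i hf i).mul (diff_comp_i hg i)))]
  rw [ContinuousLinearMap.sum_apply]
  have : ∀ i : Fin 3, fderiv ℝ (fun q' => f q' i * g q' i) p w
      = f p i * fderiv ℝ g p w i + g p i * fderiv ℝ f p w i := by
    intro i
    rw [fderiv_fun_mul (diff_comp_i hf i) (diff_comp_i hg i)]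
    simp [fderiv_comp_i hf i w, fderiv_comp_i hg i w]
  simp only [this, Fin.sum_univ_three, dot3_eq]; ring

lemma fderiv_smul_apply (hc : DifferentiableAt ℝ c p) (hf : DifferentiableAt ℝ f p) (w : ℝ × ℝ) :
    fderiv ℝ (fun q => c q • f q) p w
      = (fderiv ℝ c p w) • f p + c p • fderiv ℝ f p w := by
  rw [fderiv_fun_smul hc hf]
  simp only [ContinuousLinearMap.add_apply, ContinuousLinearMap.smul_apply,
    ContinuousLinearMap.smulRight_apply]
  abel

lemma contDiffOn_dot3 {U : Set (ℝ × ℝ)} {n : WithTop ℕ∞} (hf : ContDiffOn ℝ n f U)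
    (hg : ContDiffOn ℝ n g U) : ContDiffOn ℝ n (fun q => dot3 (f q) (g q)) U := by
  have h : (fun q => dot3 (f q) (g q)) = fun q => ∑ i : Fin 3, (fun j => fun q' => f q' j * g q' j) i q := rfl
  rw [h]
  apply ContDiffOn.sum (fun i _ => ?_)
  exact ((ContinuousLinearMap.proj i : V3 →L[ℝ] ℝ).contDiff.comp_contDiffOn hf).mul
    ((ContinuousLinearMap.proj i : V3 →L[ℝ] ℝ).contDiff.comp_contDiffOn hg)

/-- symmetry of mixed second partial derivatives -/
lemma second_symm {X : Type} [NormedAddCommGroup X] [NormedSpace ℝ X] {F : ℝ × ℝ → X}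
    (hf2 : ContDiffAt ℝ 2 F p) : pv (pu F) p = pu (pv F) p := by
  have hd : DifferentiableAt ℝ (fderiv ℝ F) p :=
    (hf2.fderiv_right (le_refl 2)).differentiableAt one_ne_zero
  have h1 : pv (pu F) p = fderiv ℝ (fderiv ℝ F) p (0, 1) (1, 0) := by
    show fderiv ℝ (fun q => (fderiv ℝ F q) (1, 0)) p (0, 1) = _
    rw [fderiv_clm_apply hd (differentiableAt_const _)]
    simp
  have h2 : pu (pv F) p = fderiv ℝ (fderiv ℝ F) p (1, 0) (0, 1) := by
    show fderiv ℝ (fun q => (fderiv ℝ F q) (0, 1)) p (1, 0) = _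
    rw [fderiv_clm_apply hd (differentiableAt_const _)]
    simp
  rw [h1, h2, hf2.isSymmSndFDerivAt (by simp [minSmoothness_of_isRCLikeNormedField])]

end calcpart

/-! ### Smoothness of the frame fields -/

section smoothpart
variable {U : Set (ℝ × ℝ)} {φ : ℝ × ℝ → V3}

lemma contDiffOn_pu (hU : IsOpen U) (hφ : ContDiffOn ℝ (⊤ : ℕ∞) φ U) :
    ContDiffOn ℝ 2 (pu φ) U :=
  (hφ.fderiv_of_isOpen hU (WithTop.coe_le_coe.mpr le_top)).clm_apply contDiffOn_const

lemma contDiffOn_pv (hU : IsOpen U) (hφ : ContDiffOn ℝ (⊤ : ℕ∞) φ U) :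
    ContDiffOn ℝ 2 (pv φ) U :=
  (hφ.fderiv_of_isOpen hU (WithTop.coe_le_coe.mpr le_top)).clm_apply contDiffOn_const

lemma contDiffOn_Efun (hU : IsOpen U) (hφ : ContDiffOn ℝ (⊤ : ℕ∞) φ U) :
    ContDiffOn ℝ 2 (Efun φ) U :=
  contDiffOn_dot3 (contDiffOn_pu hU hφ) (contDiffOn_pu hU hφ)

lemma contDiffOn_Gfun (hU : IsOpen U) (hφ : ContDiffOn ℝ (⊤ : ℕ∞) φ U) :
    ContDiffOn ℝ 2 (Gfun φ) U :=
  contDiffOn_dot3 (contDiffOn_pv hU hφ) (contDiffOn_pv hU hφ)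

lemma contDiffOn_sE (hU : IsOpen U) (hφ : ContDiffOn ℝ (⊤ : ℕ∞) φ U)
    (hEpos : ∀ p ∈ U, 0 < Efun φ p) :
    ContDiffOn ℝ 2 (fun q => Real.sqrt (Efun φ q)) U := fun q hq =>
  (Real.contDiffAt_sqrt (hEpos q hq).ne').comp_contDiffWithinAt q
    ((contDiffOn_Efun hU hφ) q hq)

lemma contDiffOn_sG (hU : IsOpen U) (hφ : ContDiffOn ℝ (⊤ : ℕ∞) φ U)
    (hGpos : ∀ p ∈ U, 0 < Gfun φ p) :
    ContDiffOn ℝ 2 (fun q => Real.sqrt (Gfun φ q)) U := fun q hq =>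
  (Real.contDiffAt_sqrt (hGpos q hq).ne').comp_contDiffWithinAt q
    ((contDiffOn_Gfun hU hφ) q hq)

lemma contDiffOn_e1 (hU : IsOpen U) (hφ : ContDiffOn ℝ (⊤ : ℕ∞) φ U)
    (hEpos : ∀ p ∈ U, 0 < Efun φ p) :
    ContDiffOn ℝ 2 (e1 φ) U := by
  have h1 : ContDiffOn ℝ 2 (fun q => (Real.sqrt (Efun φ q))⁻¹) U :=
    (contDiffOn_sE hU hφ hEpos).inv
      (fun q hq => (Real.sqrt_pos.2 (hEpos q hq)).ne')
  exact h1.smul (contDiffOn_pu hU hφ)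

lemma contDiffOn_e2 (hU : IsOpen U) (hφ : ContDiffOn ℝ (⊤ : ℕ∞) φ U)
    (hGpos : ∀ p ∈ U, 0 < Gfun φ p) :
    ContDiffOn ℝ 2 (e2 φ) U := by
  have h1 : ContDiffOn ℝ 2 (fun q => (Real.sqrt (Gfun φ q))⁻¹) U :=
    (contDiffOn_sG hU hφ hGpos).inv
      (fun q hq => (Real.sqrt_pos.2 (hGpos q hq)).ne')
  exact h1.smul (contDiffOn_pv hU hφ)

lemma contDiffOn_cross {f g : ℝ × ℝ → V3} {n : WithTop ℕ∞} (hf : ContDiffOn ℝ n f U)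
    (hg : ContDiffOn ℝ n g U) : ContDiffOn ℝ n (fun q => cross3 (f q) (g q)) U := by
  have comp : ∀ (h : ℝ × ℝ → V3), ContDiffOn ℝ n h U → ∀ i : Fin 3,
      ContDiffOn ℝ n (fun q => h q i) U := fun h hh i =>
    (ContinuousLinearMap.proj i : V3 →L[ℝ] ℝ).contDiff.comp_contDiffOn hh
  apply contDiffOn_pi.2
  intro i
  fin_cases i <;> simp only [cross3, Matrix.cons_val_zero, Matrix.cons_val_one,
    Matrix.head_cons, Matrix.cons_val_two, Matrix.tail_cons, Fin.isValue] <;>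
    exact ((comp f hf _).mul (comp g hg _)).sub ((comp f hf _).mul (comp g hg _))

lemma contDiffOn_nuv (hU : IsOpen U) (hφ : ContDiffOn ℝ (⊤ : ℕ∞) φ U)
    (hEpos : ∀ p ∈ U, 0 < Efun φ p) (hGpos : ∀ p ∈ U, 0 < Gfun φ p) :
    ContDiffOn ℝ 2 (nuv φ) U :=
  contDiffOn_cross (contDiffOn_e1 hU hφ hEpos) (contDiffOn_e2 hU hφ hGpos)

end smoothpart
open Topology
set_option maxHeartbeats 1000000


/-! ### Surface geometry facts -/

section surface
variable {U : Set (ℝ × ℝ)} {φ : ℝ × ℝ → V3} {c₁ c₂ : ℝ × ℝ → ℝ} {p : ℝ × ℝ}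

lemma surface_facts (hU : IsOpen U) (hφ : ContDiffOn ℝ (⊤ : ℕ∞) φ U)
    (hEpos : ∀ p ∈ U, 0 < Efun φ p) (hGpos : ∀ p ∈ U, 0 < Gfun φ p)
    (horth : ∀ p ∈ U, dot3 (pu φ p) (pv φ p) = 0)
    (hc₁ : ContDiffOn ℝ (⊤ : ℕ∞) c₁ U) (hc₂ : ContDiffOn ℝ (⊤ : ℕ∞) c₂ U)
    (hcurv : ∀ p ∈ U, pu (nuv φ) p = (-c₁ p) • pu φ p ∧ pv (nuv φ) p = (-c₂ p) • pv φ p)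
    (hp : p ∈ U) :
    pu (e1 φ) p = (Real.sqrt (Efun φ p) * kap1 φ p) • e2 φ p
        + (Real.sqrt (Efun φ p) * c₁ p) • nuv φ p
    ∧ pv (e1 φ) p = (Real.sqrt (Gfun φ p) * kap2 φ p) • e2 φ p
    ∧ pu (e2 φ) p = (-(Real.sqrt (Efun φ p) * kap1 φ p)) • e1 φ p
    ∧ pv (e2 φ) p = (-(Real.sqrt (Gfun φ p) * kap2 φ p)) • e1 φ p
        + (Real.sqrt (Gfun φ p) * c₂ p) • nuv φ p
    ∧ dot3 (gradS φ c₁ p) (e2 φ p) = (c₁ p - c₂ p) * kap1 φ p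
    ∧ dot3 (gradS φ c₂ p) (e1 φ p) = (c₁ p - c₂ p) * kap2 φ p := by
  have hpU : U ∈ 𝓝 p := hU.mem_nhds hp
  have hE := hEpos p hp
  have hG := hGpos p hp
  have hsE : (0:ℝ) < Real.sqrt (Efun φ p) := Real.sqrt_pos.2 hE
  have hsG : (0:ℝ) < Real.sqrt (Gfun φ p) := Real.sqrt_pos.2 hG
  have hsE2 : Real.sqrt (Efun φ p) * Real.sqrt (Efun φ p) = Efun φ p := Real.mul_self_sqrt hE.le
  have hsG2 : Real.sqrt (Gfun φ p) * Real.sqrt (Gfun φ p) = Gfun φ p := Real.mul_self_sqrt hG.le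
  -- differentiability at p
  have dAt : ∀ {F : ℝ × ℝ → V3}, ContDiffOn ℝ 2 F U → DifferentiableAt ℝ F p := fun h =>
    (h.contDiffAt hpU).differentiableAt two_ne_zero
  have dAtR : ∀ {F : ℝ × ℝ → ℝ}, ContDiffOn ℝ 2 F U → DifferentiableAt ℝ F p := fun h =>
    (h.contDiffAt hpU).differentiableAt two_ne_zero
  have hfu := dAt (contDiffOn_pu hU hφ)
  have hfv := dAt (contDiffOn_pv hU hφ)
  have he1d := dAt (contDiffOn_e1 hU hφ hEpos)
  have he2d := dAt (contDiffOn_e2 hU hφ hGpos)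
  have hnu := dAt (contDiffOn_nuv hU hφ hEpos hGpos)
  have hsEd := dAtR (contDiffOn_sE hU hφ hEpos)
  have hsGd := dAtR (contDiffOn_sG hU hφ hGpos)
  have hc1d : DifferentiableAt ℝ c₁ p := (hc₁.contDiffAt hpU).differentiableAt (by simp)
  have hc2d : DifferentiableAt ℝ c₂ p := (hc₂.contDiffAt hpU).differentiableAt (by simp)
  -- bridges
  have rpu : ∀ (F : ℝ × ℝ → V3), fderiv ℝ F p ((1:ℝ),(0:ℝ)) = pu F p := fun F => rfl
  have rpv : ∀ (F : ℝ × ℝ → V3), fderiv ℝ F p ((0:ℝ),(1:ℝ)) = pv F p := fun F => rfl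
  have rpuR : ∀ (F : ℝ × ℝ → ℝ), fderiv ℝ F p ((1:ℝ),(0:ℝ)) = pu F p := fun F => rfl
  have rpvR : ∀ (F : ℝ × ℝ → ℝ), fderiv ℝ F p ((0:ℝ),(1:ℝ)) = pv F p := fun F => rfl
  have hEdef : dot3 (pu φ p) (pu φ p) = Efun φ p := rfl
  have hGdef : dot3 (pv φ p) (pv φ p) = Gfun φ p := rfl
  -- symmetry of second derivatives of φ
  have hsym : pv (pu φ) p = pu (pv φ) p := second_symm ((hφ.contDiffAt hpU).of_le (by simpa using (WithTop.coe_le_coe.mpr (le_top : (2:ℕ∞) ≤ ⊤))))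
  -- first fundamental form derivatives
  have hEv : pv (Efun φ) p = 2 * dot3 (pv (pu φ) p) (pu φ p) := by
    have h : fderiv ℝ (fun q => dot3 (pu φ q) (pu φ q)) p ((0:ℝ),(1:ℝ))
        = dot3 (fderiv ℝ (pu φ) p ((0:ℝ),(1:ℝ))) (pu φ p)
          + dot3 (pu φ p) (fderiv ℝ (pu φ) p ((0:ℝ),(1:ℝ))) := fderiv_dot3 hfu hfu _
    rw [rpv] at h
    rw [show pv (Efun φ) p = fderiv ℝ (fun q => dot3 (pu φ q) (pu φ q)) p ((0:ℝ),(1:ℝ)) from rfl, h,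
      dot3_comm (pu φ p)]
    ring
  have hGu : pu (Gfun φ) p = 2 * dot3 (pu (pv φ) p) (pv φ p) := by
    have h : fderiv ℝ (fun q => dot3 (pv φ q) (pv φ q)) p ((1:ℝ),(0:ℝ))
        = dot3 (fderiv ℝ (pv φ) p ((1:ℝ),(0:ℝ))) (pv φ p)
          + dot3 (pv φ p) (fderiv ℝ (pv φ) p ((1:ℝ),(0:ℝ))) := fderiv_dot3 hfv hfv _
    rw [rpu] at h
    rw [show pu (Gfun φ) p = fderiv ℝ (fun q => dot3 (pv φ q) (pv φ q)) p ((1:ℝ),(0:ℝ)) from rfl, h,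
      dot3_comm (pv φ p)]
    ring
  -- orthogonality derivatives
  have horth0 : fderiv ℝ (fun q => dot3 (pu φ q) (pv φ q)) p = 0 := by
    have heq : (fun q => dot3 (pu φ q) (pv φ q)) =ᶠ[𝓝 p] (fun _ => (0:ℝ)) :=
      Filter.eventuallyEq_of_mem hpU (fun q hq => horth q hq)
    rw [heq.fderiv_eq]; exact fderiv_const_apply 0
  have h5 : dot3 (pu (pu φ) p) (pv φ p) + dot3 (pu φ p) (pu (pv φ) p) = 0 := by
    have h := fderiv_dot3 hfu hfv ((1:ℝ),(0:ℝ))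
    rw [horth0, rpu (pu φ), rpu (pv φ)] at h
    simpa using h.symm
  have h6 : dot3 (pv (pu φ) p) (pv φ p) + dot3 (pu φ p) (pv (pv φ) p) = 0 := by
    have h := fderiv_dot3 hfu hfv ((0:ℝ),(1:ℝ))
    rw [horth0, rpv (pu φ), rpv (pv φ)] at h
    simpa using h.symm
  -- normal orthogonality (pointwise, everywhere)
  have hnufu : ∀ q, dot3 (nuv φ q) (pu φ q) = 0 := fun q => by
    show dot3 (cross3 ((Real.sqrt (Efun φ q))⁻¹ • pu φ q) ((Real.sqrt (Gfun φ q))⁻¹ • pv φ q))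
      (pu φ q) = 0
    rw [cross3_smul_smul, dot3_smul_left, dot3_cross_left, mul_zero]
  have hnufv : ∀ q, dot3 (nuv φ q) (pv φ q) = 0 := fun q => by
    show dot3 (cross3 ((Real.sqrt (Efun φ q))⁻¹ • pu φ q) ((Real.sqrt (Gfun φ q))⁻¹ • pv φ q))
      (pv φ q) = 0
    rw [cross3_smul_smul, dot3_smul_left, dot3_cross_right, mul_zero]
  have hZu : fderiv ℝ (fun q => dot3 (nuv φ q) (pu φ q)) p = 0 := by
    rw [funext hnufu]; exact fderiv_const_apply 0
  have hZv : fderiv ℝ (fun q => dot3 (nuv φ q) (pv φ q)) p = 0 := by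
    rw [funext hnufv]; exact fderiv_const_apply 0
  have hcu := (hcurv p hp).1
  have hcv := (hcurv p hp).2
  have hnu_uu : dot3 (nuv φ p) (pu (pu φ) p) = c₁ p * Efun φ p := by
    have h := fderiv_dot3 hnu hfu ((1:ℝ),(0:ℝ))
    rw [hZu, rpu (nuv φ), rpu (pu φ), hcu, dot3_smul_left, hEdef] at h
    simp only [ContinuousLinearMap.zero_apply] at h
    linarith [h]
  have hnu_uv : dot3 (nuv φ p) (pv (pu φ) p) = 0 := by
    have h := fderiv_dot3 hnu hfu ((0:ℝ),(1:ℝ))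
    rw [hZu, rpv (nuv φ), rpv (pu φ), hcv, dot3_smul_left] at h
    rw [dot3_comm (pv φ p) (pu φ p)] at h
    rw [horth p hp] at h
    simp only [ContinuousLinearMap.zero_apply, mul_zero, neg_zero, zero_add] at h
    linarith [h]
  have hnu_vv : dot3 (nuv φ p) (pv (pv φ) p) = c₂ p * Gfun φ p := by
    have h := fderiv_dot3 hnu hfv ((0:ℝ),(1:ℝ))
    rw [hZv, rpv (nuv φ), rpv (pv φ), hcv, dot3_smul_left, hGdef] at h
    simp only [ContinuousLinearMap.zero_apply] at h
    linarith [h]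
  -- frame products at p
  have he1e2 : dot3 (e1 φ p) (e2 φ p) = 0 := by
    show dot3 ((Real.sqrt (Efun φ p))⁻¹ • pu φ p) ((Real.sqrt (Gfun φ p))⁻¹ • pv φ p) = 0
    rw [dot3_smul_left, dot3_smul_right, horth p hp, mul_zero, mul_zero]
  have he1e1 : dot3 (e1 φ p) (e1 φ p) = 1 := by
    show dot3 ((Real.sqrt (Efun φ p))⁻¹ • pu φ p) ((Real.sqrt (Efun φ p))⁻¹ • pu φ p) = 1
    rw [dot3_smul_left, dot3_smul_right, hEdef, ← hsE2]
    rw [Real.sqrt_mul_self hsE.le]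
    field_simp
  have he2e2 : dot3 (e2 φ p) (e2 φ p) = 1 := by
    show dot3 ((Real.sqrt (Gfun φ p))⁻¹ • pv φ p) ((Real.sqrt (Gfun φ p))⁻¹ • pv φ p) = 1
    rw [dot3_smul_left, dot3_smul_right, hGdef, ← hsG2]
    rw [Real.sqrt_mul_self hsG.le]
    field_simp
  have he1nu : dot3 (e1 φ p) (nuv φ p) = 0 := by
    rw [dot3_comm]; exact dot3_cross_left (e1 φ p) (e2 φ p)
  have he2nu : dot3 (e2 φ p) (nuv φ p) = 0 := by
    rw [dot3_comm]; exact dot3_cross_right (e1 φ p) (e2 φ p)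
  -- φ_u = √E • e₁ etc. near p
  have hfuid : (pu φ) =ᶠ[𝓝 p] (fun q => Real.sqrt (Efun φ q) • e1 φ q) := by
    filter_upwards [hpU] with q hq
    show pu φ q = Real.sqrt (Efun φ q) • ((Real.sqrt (Efun φ q))⁻¹ • pu φ q)
    rw [smul_smul, mul_inv_cancel₀ (Real.sqrt_pos.2 (hEpos q hq)).ne', one_smul]
  have hfvid : (pv φ) =ᶠ[𝓝 p] (fun q => Real.sqrt (Gfun φ q) • e2 φ q) := by
    filter_upwards [hpU] with q hq
    show pv φ q = Real.sqrt (Gfun φ q) • ((Real.sqrt (Gfun φ q))⁻¹ • pv φ q)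
    rw [smul_smul, mul_inv_cancel₀ (Real.sqrt_pos.2 (hGpos q hq)).ne', one_smul]
  have hfuu_e : pu (pu φ) p = pu (fun q => Real.sqrt (Efun φ q)) p • e1 φ p
      + Real.sqrt (Efun φ p) • pu (e1 φ) p := by
    rw [show pu (pu φ) p = fderiv ℝ (pu φ) p ((1:ℝ),(0:ℝ)) from rfl, hfuid.fderiv_eq,
      fderiv_smul_apply hsEd he1d, rpuR, rpu]
  have hfuv_e : pv (pu φ) p = pv (fun q => Real.sqrt (Efun φ q)) p • e1 φ p
      + Real.sqrt (Efun φ p) • pv (e1 φ) p := by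
    rw [show pv (pu φ) p = fderiv ℝ (pu φ) p ((0:ℝ),(1:ℝ)) from rfl, hfuid.fderiv_eq,
      fderiv_smul_apply hsEd he1d, rpvR, rpv]
  have hfvu_e : pu (pv φ) p = pu (fun q => Real.sqrt (Gfun φ q)) p • e2 φ p
      + Real.sqrt (Gfun φ p) • pu (e2 φ) p := by
    rw [show pu (pv φ) p = fderiv ℝ (pv φ) p ((1:ℝ),(0:ℝ)) from rfl, hfvid.fderiv_eq,
      fderiv_smul_apply hsGd he2d, rpuR, rpu]
  have hfvv_e : pv (pv φ) p = pv (fun q => Real.sqrt (Gfun φ q)) p • e2 φ p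
      + Real.sqrt (Gfun φ p) • pv (e2 φ) p := by
    rw [show pv (pv φ) p = fderiv ℝ (pv φ) p ((0:ℝ),(1:ℝ)) from rfl, hfvid.fderiv_eq,
      fderiv_smul_apply hsGd he2d, rpvR, rpv]
  -- unit length derivatives
  have he1unit : (fun q => dot3 (e1 φ q) (e1 φ q)) =ᶠ[𝓝 p] (fun _ => (1:ℝ)) := by
    filter_upwards [hpU] with q hq
    show dot3 ((Real.sqrt (Efun φ q))⁻¹ • pu φ q) ((Real.sqrt (Efun φ q))⁻¹ • pu φ q) = 1
    rw [dot3_smul_left, dot3_smul_right,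
      show dot3 (pu φ q) (pu φ q) = Efun φ q from rfl,
      ← Real.mul_self_sqrt (hEpos q hq).le]
    rw [Real.sqrt_mul_self (Real.sqrt_nonneg _)]
    have hne := (Real.sqrt_pos.2 (hEpos q hq)).ne'
    field_simp
  have he2unit : (fun q => dot3 (e2 φ q) (e2 φ q)) =ᶠ[𝓝 p] (fun _ => (1:ℝ)) := by
    filter_upwards [hpU] with q hq
    show dot3 ((Real.sqrt (Gfun φ q))⁻¹ • pv φ q) ((Real.sqrt (Gfun φ q))⁻¹ • pv φ q) = 1
    rw [dot3_smul_left, dot3_smul_right,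
      show dot3 (pv φ q) (pv φ q) = Gfun φ q from rfl,
      ← Real.mul_self_sqrt (hGpos q hq).le]
    rw [Real.sqrt_mul_self (Real.sqrt_nonneg _)]
    have hne := (Real.sqrt_pos.2 (hGpos q hq)).ne'
    field_simp
  have h0e1 : fderiv ℝ (fun q => dot3 (e1 φ q) (e1 φ q)) p = 0 := by
    rw [he1unit.fderiv_eq]; exact fderiv_const_apply 1
  have h0e2 : fderiv ℝ (fun q => dot3 (e2 φ q) (e2 φ q)) p = 0 := by
    rw [he2unit.fderiv_eq]; exact fderiv_const_apply 1
  have hdue1e1 : dot3 (pu (e1 φ) p) (e1 φ p) = 0 := by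
    have h := fderiv_dot3 he1d he1d ((1:ℝ),(0:ℝ))
    rw [h0e1, rpu (e1 φ)] at h
    simp only [ContinuousLinearMap.zero_apply] at h
    have := dot3_comm (e1 φ p) (pu (e1 φ) p)
    linarith
  have hdve1e1 : dot3 (pv (e1 φ) p) (e1 φ p) = 0 := by
    have h := fderiv_dot3 he1d he1d ((0:ℝ),(1:ℝ))
    rw [h0e1, rpv (e1 φ)] at h
    simp only [ContinuousLinearMap.zero_apply] at h
    have := dot3_comm (e1 φ p) (pv (e1 φ) p)
    linarith
  have hdue2e2 : dot3 (pu (e2 φ) p) (e2 φ p) = 0 := by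
    have h := fderiv_dot3 he2d he2d ((1:ℝ),(0:ℝ))
    rw [h0e2, rpu (e2 φ)] at h
    simp only [ContinuousLinearMap.zero_apply] at h
    have := dot3_comm (e2 φ p) (pu (e2 φ) p)
    linarith
  have hdve2e2 : dot3 (pv (e2 φ) p) (e2 φ p) = 0 := by
    have h := fderiv_dot3 he2d he2d ((0:ℝ),(1:ℝ))
    rw [h0e2, rpv (e2 φ)] at h
    simp only [ContinuousLinearMap.zero_apply] at h
    have := dot3_comm (e2 φ p) (pv (e2 φ) p)
    linarith

  -- mixed second-derivative dot products
  have hfuvfu : dot3 (pv (pu φ) p) (pu φ p) = pv (Efun φ) p / 2 := by linarith [hEv]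
  have hfuufv : dot3 (pu (pu φ) p) (pv φ p) = -(pv (Efun φ) p) / 2 := by
    have h4 : dot3 (pu φ p) (pu (pv φ) p) = pv (Efun φ) p / 2 := by
      rw [← hsym, dot3_comm]; linarith [hEv]
    linarith [h5]
  have hfuvfv : dot3 (pv (pu φ) p) (pv φ p) = pu (Gfun φ) p / 2 := by
    rw [hsym]; linarith [hGu]
  have hfvvfu : dot3 (pv (pv φ) p) (pu φ p) = -(pu (Gfun φ) p) / 2 := by
    rw [dot3_comm]; linarith [h6, hfuvfv]
  have he2e1 : dot3 (e2 φ p) (e1 φ p) = 0 := by rw [dot3_comm]; exact he1e2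
  -- frame derivative dot products
  have hdue1e2 : dot3 (pu (e1 φ) p) (e2 φ p) = Real.sqrt (Efun φ p) * kap1 φ p := by
    have h := congrArg (fun x => dot3 x (e2 φ p)) hfuu_e
    simp only [dot3_add_left, dot3_smul_left] at h
    rw [he1e2, mul_zero, zero_add] at h
    have h2 : dot3 (pu (pu φ) p) (e2 φ p) = (Real.sqrt (Gfun φ p))⁻¹ * (-(pv (Efun φ) p) / 2) := by
      rw [show e2 φ p = (Real.sqrt (Gfun φ p))⁻¹ • pv φ p from rfl, dot3_smul_right, hfuufv]
    rw [h2] at h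
    simp only [kap1]
    apply mul_left_cancel₀ hsE.ne'
    rw [← h]
    field_simp
    linear_combination (pv (Efun φ) p) * hsE2
  have hdue1nu : dot3 (pu (e1 φ) p) (nuv φ p) = Real.sqrt (Efun φ p) * c₁ p := by
    have h := congrArg (fun x => dot3 x (nuv φ p)) hfuu_e
    simp only [dot3_add_left, dot3_smul_left] at h
    rw [he1nu, mul_zero, zero_add, dot3_comm (pu (pu φ) p), hnu_uu] at h
    apply mul_left_cancel₀ hsE.ne'
    rw [← h]
    linear_combination (-(c₁ p)) * hsE2
  have hdve1e2 : dot3 (pv (e1 φ) p) (e2 φ p) = Real.sqrt (Gfun φ p) * kap2 φ p := by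
    have h := congrArg (fun x => dot3 x (e2 φ p)) hfuv_e
    simp only [dot3_add_left, dot3_smul_left] at h
    rw [he1e2, mul_zero, zero_add] at h
    have h2 : dot3 (pv (pu φ) p) (e2 φ p) = (Real.sqrt (Gfun φ p))⁻¹ * (pu (Gfun φ) p / 2) := by
      rw [show e2 φ p = (Real.sqrt (Gfun φ p))⁻¹ • pv φ p from rfl, dot3_smul_right, hfuvfv]
    rw [h2] at h
    simp only [kap2]
    apply mul_left_cancel₀ hsE.ne'
    rw [← h]
    field_simp
    linear_combination (-(pu (Gfun φ) p)) * hsG2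
  have hdve1nu : dot3 (pv (e1 φ) p) (nuv φ p) = 0 := by
    have h := congrArg (fun x => dot3 x (nuv φ p)) hfuv_e
    simp only [dot3_add_left, dot3_smul_left] at h
    rw [he1nu, mul_zero, zero_add, dot3_comm (pv (pu φ) p), hnu_uv] at h
    exact (mul_eq_zero.1 h.symm).resolve_left hsE.ne'
  have hdue2e1 : dot3 (pu (e2 φ) p) (e1 φ p) = -(Real.sqrt (Efun φ p) * kap1 φ p) := by
    have h := congrArg (fun x => dot3 x (e1 φ p)) hfvu_e
    simp only [dot3_add_left, dot3_smul_left] at h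
    rw [he2e1, mul_zero, zero_add] at h
    have h2 : dot3 (pu (pv φ) p) (e1 φ p) = (Real.sqrt (Efun φ p))⁻¹ * (pv (Efun φ) p / 2) := by
      rw [show e1 φ p = (Real.sqrt (Efun φ p))⁻¹ • pu φ p from rfl, dot3_smul_right, ← hsym,
        hfuvfu]
    rw [h2] at h
    simp only [kap1]
    apply mul_left_cancel₀ hsG.ne'
    rw [← h]
    field_simp
    linear_combination (-(pv (Efun φ) p)) * hsE2
  have hdue2nu : dot3 (pu (e2 φ) p) (nuv φ p) = 0 := by
    have h := congrArg (fun x => dot3 x (nuv φ p)) hfvu_e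
    simp only [dot3_add_left, dot3_smul_left] at h
    rw [he2nu, mul_zero, zero_add, dot3_comm (pu (pv φ) p), ← hsym, hnu_uv] at h
    exact (mul_eq_zero.1 h.symm).resolve_left hsG.ne'
  have hdve2e1 : dot3 (pv (e2 φ) p) (e1 φ p) = -(Real.sqrt (Gfun φ p) * kap2 φ p) := by
    have h := congrArg (fun x => dot3 x (e1 φ p)) hfvv_e
    simp only [dot3_add_left, dot3_smul_left] at h
    rw [he2e1, mul_zero, zero_add] at h
    have h2 : dot3 (pv (pv φ) p) (e1 φ p) = (Real.sqrt (Efun φ p))⁻¹ * (-(pu (Gfun φ) p) / 2) := by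
      rw [show e1 φ p = (Real.sqrt (Efun φ p))⁻¹ • pu φ p from rfl, dot3_smul_right, hfvvfu]
    rw [h2] at h
    simp only [kap2]
    apply mul_left_cancel₀ hsG.ne'
    rw [← h]
    field_simp
    linear_combination (pu (Gfun φ) p) * hsG2
  have hdve2nu : dot3 (pv (e2 φ) p) (nuv φ p) = Real.sqrt (Gfun φ p) * c₂ p := by
    have h := congrArg (fun x => dot3 x (nuv φ p)) hfvv_e
    simp only [dot3_add_left, dot3_smul_left] at h
    rw [he2nu, mul_zero, zero_add, dot3_comm (pv (pv φ) p), hnu_vv] at h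
    apply mul_left_cancel₀ hsG.ne'
    rw [← h]
    linear_combination (-(c₂ p)) * hsG2
  -- Codazzi equations
  have hNu : (pu (nuv φ)) =ᶠ[𝓝 p] (fun q => (-c₁ q) • pu φ q) :=
    Filter.eventuallyEq_of_mem hpU (fun q hq => (hcurv q hq).1)
  have hNv : (pv (nuv φ)) =ᶠ[𝓝 p] (fun q => (-c₂ q) • pv φ q) :=
    Filter.eventuallyEq_of_mem hpU (fun q hq => (hcurv q hq).2)
  have hpvpuN : pv (pu (nuv φ)) p = (-(pv c₁ p)) • pu φ p + (-c₁ p) • pv (pu φ) p := by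
    rw [show pv (pu (nuv φ)) p = fderiv ℝ (pu (nuv φ)) p ((0:ℝ),(1:ℝ)) from rfl, hNu.fderiv_eq,
      fderiv_smul_apply (c := fun q => -c₁ q) (hc1d.neg) hfu, fderiv_fun_neg, ContinuousLinearMap.neg_apply, rpvR, rpv]
  have hpupvN : pu (pv (nuv φ)) p = (-(pu c₂ p)) • pv φ p + (-c₂ p) • pu (pv φ) p := by
    rw [show pu (pv (nuv φ)) p = fderiv ℝ (pv (nuv φ)) p ((1:ℝ),(0:ℝ)) from rfl, hNv.fderiv_eq,
      fderiv_smul_apply (c := fun q => -c₂ q) (hc2d.neg) hfv, fderiv_fun_neg, ContinuousLinearMap.neg_apply, rpuR, rpu]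
  have hNsym : pv (pu (nuv φ)) p = pu (pv (nuv φ)) p :=
    second_symm ((contDiffOn_nuv hU hφ hEpos hGpos).contDiffAt hpU)
  have hEqv : (-(pv c₁ p)) • pu φ p + (-c₁ p) • pv (pu φ) p
      = (-(pu c₂ p)) • pv φ p + (-c₂ p) • pu (pv φ) p := by
    rw [← hpvpuN, hNsym, hpupvN]
  have hdotu := congrArg (fun x => dot3 x (pu φ p)) hEqv
  have hdotv := congrArg (fun x => dot3 x (pv φ p)) hEqv
  simp only [dot3_add_left, dot3_smul_left] at hdotu hdotv
  rw [← hsym] at hdotu hdotv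
  rw [hEdef, hfuvfu, show dot3 (pv φ p) (pu φ p) = 0 from by
    rw [dot3_comm]; exact horth p hp] at hdotu
  rw [horth p hp, hGdef, hfuvfv] at hdotv
  have hCod1 : pv c₁ p = (c₂ p - c₁ p) * pv (Efun φ) p / (2 * Efun φ p) := by
    rw [eq_div_iff (by positivity)]
    linear_combination (-2 : ℝ) * hdotu
  have hCod2 : pu c₂ p = (c₁ p - c₂ p) * pu (Gfun φ) p / (2 * Gfun φ p) := by
    rw [eq_div_iff (by positivity)]
    linear_combination (2 : ℝ) * hdotv
  -- assemble
  refine ⟨?_, ?_, ?_, ?_, ?_, ?_⟩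
  · rw [onb_expand (e1 φ p) (e2 φ p) (pu (e1 φ) p) he1e1 he2e2 he1e2]
    rw [show cross3 (e1 φ p) (e2 φ p) = nuv φ p from rfl]
    rw [dot3_comm (e1 φ p), hdue1e1, dot3_comm (e2 φ p), hdue1e2, dot3_comm (nuv φ p), hdue1nu]
    rw [zero_smul, zero_add]
  · rw [onb_expand (e1 φ p) (e2 φ p) (pv (e1 φ) p) he1e1 he2e2 he1e2]
    rw [show cross3 (e1 φ p) (e2 φ p) = nuv φ p from rfl]
    rw [dot3_comm (e1 φ p), hdve1e1, dot3_comm (e2 φ p), hdve1e2, dot3_comm (nuv φ p), hdve1nu]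
    rw [zero_smul, zero_add, zero_smul, add_zero]
  · rw [onb_expand (e1 φ p) (e2 φ p) (pu (e2 φ) p) he1e1 he2e2 he1e2]
    rw [show cross3 (e1 φ p) (e2 φ p) = nuv φ p from rfl]
    rw [dot3_comm (e1 φ p), hdue2e1, dot3_comm (e2 φ p), hdue2e2, dot3_comm (nuv φ p), hdue2nu]
    rw [zero_smul, add_zero, zero_smul, add_zero]
  · rw [onb_expand (e1 φ p) (e2 φ p) (pv (e2 φ) p) he1e1 he2e2 he1e2]
    rw [show cross3 (e1 φ p) (e2 φ p) = nuv φ p from rfl]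
    rw [dot3_comm (e1 φ p), hdve2e1, dot3_comm (e2 φ p), hdve2e2, dot3_comm (nuv φ p), hdve2nu]
    rw [zero_smul, add_zero]
  · simp only [gradS]
    rw [dot3_add_left, dot3_smul_left, dot3_smul_left, he1e2, he2e2, mul_zero, mul_one, zero_add]
    rw [hCod1]
    simp only [kap1]
    field_simp
    ring
  · simp only [gradS]
    rw [dot3_add_left, dot3_smul_left, dot3_smul_left, he1e1, he2e1, mul_one, mul_zero, add_zero]
    rw [hCod2]
    simp only [kap2]
    field_simp

end surface

/-! ### Derivative of the shell parameterization -/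

section shell
open Topology
variable {U : Set (ℝ × ℝ)} {φ : ℝ × ℝ → V3} {p : ℝ × ℝ} {ξ : ℝ}

lemma fderiv_PhiMap_apply (hU : IsOpen U) (hφ : ContDiffOn ℝ (⊤ : ℕ∞) φ U)
    (hEpos : ∀ p ∈ U, 0 < Efun φ p) (hGpos : ∀ p ∈ U, 0 < Gfun φ p) (hp : p ∈ U)
    (w : (ℝ × ℝ) × ℝ) :
    fderiv ℝ (PhiMap φ) (p, ξ) w
      = fderiv ℝ φ p w.1 + w.2 • nuv φ p + ξ • fderiv ℝ (nuv φ) p w.1 := by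
  have hpU : U ∈ 𝓝 p := hU.mem_nhds hp
  have hφd : DifferentiableAt ℝ φ p := (hφ.contDiffAt hpU).differentiableAt (by simp)
  have hnd : DifferentiableAt ℝ (nuv φ) p :=
    ((contDiffOn_nuv hU hφ hEpos hGpos).contDiffAt hpU).differentiableAt two_ne_zero
  have h1 : HasFDerivAt (fun x : (ℝ × ℝ) × ℝ => φ x.1)
      ((fderiv ℝ φ p).comp (ContinuousLinearMap.fst ℝ (ℝ × ℝ) ℝ)) (p, ξ) :=
    hφd.hasFDerivAt.comp (p, ξ) hasFDerivAt_fst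
  have h2 : HasFDerivAt (fun x : (ℝ × ℝ) × ℝ => nuv φ x.1)
      ((fderiv ℝ (nuv φ) p).comp (ContinuousLinearMap.fst ℝ (ℝ × ℝ) ℝ)) (p, ξ) :=
    HasFDerivAt.comp (g := nuv φ) (f := Prod.fst) (p, ξ) hnd.hasFDerivAt hasFDerivAt_fst
  have h3 : HasFDerivAt (fun x : (ℝ × ℝ) × ℝ => x.2)
      (ContinuousLinearMap.snd ℝ (ℝ × ℝ) ℝ) (p, ξ) := hasFDerivAt_snd
  have h4 := h3.smul h2
  have h5 := h1.add h4
  have h6 : HasFDerivAt (PhiMap φ)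
      ((fderiv ℝ φ p).comp (ContinuousLinearMap.fst ℝ (ℝ × ℝ) ℝ)
        + (((p, ξ) : (ℝ × ℝ) × ℝ).2 •
            ((fderiv ℝ (nuv φ) p).comp (ContinuousLinearMap.fst ℝ (ℝ × ℝ) ℝ))
          + (ContinuousLinearMap.snd ℝ (ℝ × ℝ) ℝ).smulRight (nuv φ ((p, ξ) : (ℝ × ℝ) × ℝ).1)))
      (p, ξ) := h5
  rw [h6.fderiv]
  simp only [ContinuousLinearMap.add_apply, ContinuousLinearMap.coe_comp', Function.comp_apply,
    ContinuousLinearMap.coe_fst', ContinuousLinearMap.smul_apply,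
    ContinuousLinearMap.smulRight_apply, ContinuousLinearMap.coe_snd']
  abel

end shell
/-- The Fréchet derivatives of the normally extended principal directions:
`Dê₁ = κ₁(ξ) e₂⊗e₁ + κ₂(ξ) e₂⊗e₂ + (c₁/(1−ξc₁)) ν⊗e₁` and
`Dê₂ = −κ₁(ξ) e₁⊗e₁ − κ₂(ξ) e₁⊗e₂ + (c₂/(1−ξc₂)) ν⊗e₂`, where
`κ₁(ξ) = κ₁/(1−ξc₂) + ξ(∇_s c₁·e₂)/((1−ξc₁)(1−ξc₂))` and
`κ₂(ξ) = κ₂/(1−ξc₁) − ξ(∇_s c₂·e₁)/((1−ξc₁)(1−ξc₂))`. -/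
theorem fderiv_of_extended_principal_directions
    (U : Set (ℝ × ℝ)) (hU : IsOpen U)
    (φ : ℝ × ℝ → V3) (hφ : ContDiffOn ℝ (⊤ : ℕ∞) φ U)
    (hEpos : ∀ p ∈ U, 0 < Efun φ p) (hGpos : ∀ p ∈ U, 0 < Gfun φ p)
    (horth : ∀ p ∈ U, dot3 (pu φ p) (pv φ p) = 0)
    (c₁ c₂ : ℝ × ℝ → ℝ) (hc₁ : ContDiffOn ℝ (⊤ : ℕ∞) c₁ U) (hc₂ : ContDiffOn ℝ (⊤ : ℕ∞) c₂ U)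
    (hcurv : ∀ p ∈ U, pu (nuv φ) p = (-c₁ p) • pu φ p ∧ pv (nuv φ) p = (-c₂ p) • pv φ p)
    (h₀ : ℝ) (hh₀ : 0 < h₀)
    (hreg : ∀ p ∈ U, ∀ ξ ∈ Set.Ioo (-(h₀ / 2)) (h₀ / 2), 0 < 1 - ξ * c₁ p ∧ 0 < 1 - ξ * c₂ p)
    (V₀ : Set V3) (hV₀ : IsOpen V₀)
    (hbij : Set.BijOn (PhiMap φ) (U ×ˢ Set.Ioo (-(h₀ / 2)) (h₀ / 2)) V₀)
    (Ψ : V3 → (ℝ × ℝ) × ℝ) (hΨ : ContDiffOn ℝ (⊤ : ℕ∞) Ψ V₀)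
    (hΨΦ : ∀ x ∈ U ×ˢ Set.Ioo (-(h₀ / 2)) (h₀ / 2), Ψ (PhiMap φ x) = x)
    (e1hat e2hat : V3 → V3)
    (he1hat : ContDiffOn ℝ (⊤ : ℕ∞) e1hat V₀) (he2hat : ContDiffOn ℝ (⊤ : ℕ∞) e2hat V₀)
    (he1ext : ∀ p ∈ U, ∀ ξ ∈ Set.Ioo (-(h₀ / 2)) (h₀ / 2), e1hat (PhiMap φ (p, ξ)) = e1 φ p)
    (he2ext : ∀ p ∈ U, ∀ ξ ∈ Set.Ioo (-(h₀ / 2)) (h₀ / 2), e2hat (PhiMap φ (p, ξ)) = e2 φ p) :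
    ∀ p ∈ U, ∀ ξ ∈ Set.Ioo (-(h₀ / 2)) (h₀ / 2),
      (∀ a : V3,
          fderiv ℝ e1hat (PhiMap φ (p, ξ)) a =
            ((kap1 φ p / (1 - ξ * c₂ p) +
                ξ * dot3 (gradS φ c₁ p) (e2 φ p) / ((1 - ξ * c₁ p) * (1 - ξ * c₂ p))) *
              dot3 (e1 φ p) a) • e2 φ p +
              ((kap2 φ p / (1 - ξ * c₁ p) -
                  ξ * dot3 (gradS φ c₂ p) (e1 φ p) / ((1 - ξ * c₁ p) * (1 - ξ * c₂ p))) *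
                dot3 (e2 φ p) a) • e2 φ p +
              (c₁ p / (1 - ξ * c₁ p) * dot3 (e1 φ p) a) • nuv φ p) ∧
        (∀ a : V3,
          fderiv ℝ e2hat (PhiMap φ (p, ξ)) a =
            (-((kap1 φ p / (1 - ξ * c₂ p) +
                ξ * dot3 (gradS φ c₁ p) (e2 φ p) / ((1 - ξ * c₁ p) * (1 - ξ * c₂ p))) *
              dot3 (e1 φ p) a)) • e1 φ p +
              (-((kap2 φ p / (1 - ξ * c₁ p) -
                  ξ * dot3 (gradS φ c₂ p) (e1 φ p) / ((1 - ξ * c₁ p) * (1 - ξ * c₂ p))) *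
                dot3 (e2 φ p) a)) • e1 φ p +
              (c₂ p / (1 - ξ * c₂ p) * dot3 (e2 φ p) a) • nuv φ p) := by

  intro p hp ξ hξ
  have hpU : U ∈ nhds p := hU.mem_nhds hp
  have hE := hEpos p hp
  have hG := hGpos p hp
  have hsE : (0:ℝ) < Real.sqrt (Efun φ p) := Real.sqrt_pos.2 hE
  have hsG : (0:ℝ) < Real.sqrt (Gfun φ p) := Real.sqrt_pos.2 hG
  have hsE2 : Real.sqrt (Efun φ p) * Real.sqrt (Efun φ p) = Efun φ p := Real.mul_self_sqrt hE.le
  have hsG2 : Real.sqrt (Gfun φ p) * Real.sqrt (Gfun φ p) = Gfun φ p := Real.mul_self_sqrt hG.le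
  obtain ⟨hr1, hr2⟩ := hreg p hp ξ hξ
  -- frame facts
  have hEdef : dot3 (pu φ p) (pu φ p) = Efun φ p := rfl
  have hGdef : dot3 (pv φ p) (pv φ p) = Gfun φ p := rfl
  have he1e2 : dot3 (e1 φ p) (e2 φ p) = 0 := by
    show dot3 ((Real.sqrt (Efun φ p))⁻¹ • pu φ p) ((Real.sqrt (Gfun φ p))⁻¹ • pv φ p) = 0
    rw [dot3_smul_left, dot3_smul_right, horth p hp, mul_zero, mul_zero]
  have he1e1 : dot3 (e1 φ p) (e1 φ p) = 1 := by
    show dot3 ((Real.sqrt (Efun φ p))⁻¹ • pu φ p) ((Real.sqrt (Efun φ p))⁻¹ • pu φ p) = 1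
    rw [dot3_smul_left, dot3_smul_right, hEdef, ← hsE2]
    rw [Real.sqrt_mul_self hsE.le]
    field_simp
  have he2e2 : dot3 (e2 φ p) (e2 φ p) = 1 := by
    show dot3 ((Real.sqrt (Gfun φ p))⁻¹ • pv φ p) ((Real.sqrt (Gfun φ p))⁻¹ • pv φ p) = 1
    rw [dot3_smul_left, dot3_smul_right, hGdef, ← hsG2]
    rw [Real.sqrt_mul_self hsG.le]
    field_simp
  obtain ⟨hD1, hD2, hD3, hD4, hg1, hg2⟩ :=
    surface_facts hU hφ hEpos hGpos horth hc₁ hc₂ hcurv hp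
  -- differentiability
  have hφd : DifferentiableAt ℝ φ p := (hφ.contDiffAt hpU).differentiableAt (by simp)
  have hnd : DifferentiableAt ℝ (nuv φ) p :=
    ((contDiffOn_nuv hU hφ hEpos hGpos).contDiffAt hpU).differentiableAt two_ne_zero
  have he1d : DifferentiableAt ℝ (e1 φ) p :=
    ((contDiffOn_e1 hU hφ hEpos).contDiffAt hpU).differentiableAt two_ne_zero
  have he2d : DifferentiableAt ℝ (e2 φ) p :=
    ((contDiffOn_e2 hU hφ hGpos).contDiffAt hpU).differentiableAt two_ne_zero
  have hΦd : DifferentiableAt ℝ (PhiMap φ) (p, ξ) := by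
    show DifferentiableAt ℝ (fun x : (ℝ × ℝ) × ℝ => φ x.1 + x.2 • nuv φ x.1) (p, ξ)
    exact (hφd.comp (p, ξ) differentiableAt_fst).add
      (differentiableAt_snd.smul (DifferentiableAt.comp (g := nuv φ) (f := Prod.fst) (p, ξ) hnd differentiableAt_fst))
  have hXV : PhiMap φ (p, ξ) ∈ V₀ := hbij.mapsTo ⟨hp, hξ⟩
  have hWn : (U ×ˢ Set.Ioo (-(h₀ / 2)) (h₀ / 2)) ∈ nhds ((p, ξ) : (ℝ × ℝ) × ℝ) :=
    (hU.prod isOpen_Ioo).mem_nhds ⟨hp, hξ⟩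
  -- chain rule keys
  have key : ∀ (ehat : V3 → V3) (e : (ℝ × ℝ) → V3), ContDiffOn ℝ (⊤ : ℕ∞) ehat V₀ →
      DifferentiableAt ℝ e p →
      (∀ p' ∈ U, ∀ ξ' ∈ Set.Ioo (-(h₀ / 2)) (h₀ / 2), ehat (PhiMap φ (p', ξ')) = e p') →
      ∀ w : (ℝ × ℝ) × ℝ,
        fderiv ℝ ehat (PhiMap φ (p, ξ)) (fderiv ℝ (PhiMap φ) (p, ξ) w)
          = fderiv ℝ e p w.1 := by
    intro ehat e hhat hed hext w
    have hcd : DifferentiableAt ℝ ehat (PhiMap φ (p, ξ)) :=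
      (hhat.contDiffAt (hV₀.mem_nhds hXV)).differentiableAt (by simp)
    have hcomp := fderiv_comp (𝕜 := ℝ) (p, ξ) hcd hΦd
    have heq : (ehat ∘ PhiMap φ) =ᶠ[nhds ((p, ξ) : (ℝ × ℝ) × ℝ)] (fun x => e x.1) := by
      filter_upwards [hWn] with x hx
      simpa using hext x.1 hx.1 x.2 hx.2
    have hfst : fderiv ℝ (fun x : (ℝ × ℝ) × ℝ => e x.1) (p, ξ)
        = (fderiv ℝ e p).comp (ContinuousLinearMap.fst ℝ (ℝ × ℝ) ℝ) :=
      (hed.hasFDerivAt.comp (p, ξ) hasFDerivAt_fst).fderiv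
    calc fderiv ℝ ehat (PhiMap φ (p, ξ)) (fderiv ℝ (PhiMap φ) (p, ξ) w)
        = ((fderiv ℝ ehat (PhiMap φ (p, ξ))).comp (fderiv ℝ (PhiMap φ) (p, ξ))) w := rfl
      _ = (fderiv ℝ (ehat ∘ PhiMap φ) (p, ξ)) w := by rw [hcomp]
      _ = (fderiv ℝ (fun x : (ℝ × ℝ) × ℝ => e x.1) (p, ξ)) w := by rw [heq.fderiv_eq]
      _ = fderiv ℝ e p w.1 := by rw [hfst]; rfl
  -- directional linearity
  have dirV : ∀ (F : ℝ × ℝ → V3) (w1 w2 : ℝ),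
      fderiv ℝ F p (w1, w2) = w1 • pu F p + w2 • pv F p := by
    intro F w1 w2
    have hsplit : ((w1, w2) : ℝ × ℝ) = w1 • ((1:ℝ), (0:ℝ)) + w2 • ((0:ℝ), (1:ℝ)) := by
      simp [Prod.ext_iff]
    rw [hsplit, map_add, ContinuousLinearMap.map_smul, ContinuousLinearMap.map_smul]
    rfl
  constructor
  · intro a
    have hΦw : fderiv ℝ (PhiMap φ) (p, ξ)
        ((dot3 (e1 φ p) a / ((1 - ξ * c₁ p) * Real.sqrt (Efun φ p)),
          dot3 (e2 φ p) a / ((1 - ξ * c₂ p) * Real.sqrt (Gfun φ p))),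
         dot3 (nuv φ p) a) = a := by
      rw [fderiv_PhiMap_apply hU hφ hEpos hGpos hp]
      rw [dirV φ, dirV (nuv φ), (hcurv p hp).1, (hcurv p hp).2]
      conv_rhs => rw [onb_expand (e1 φ p) (e2 φ p) a he1e1 he2e2 he1e2,
        show cross3 (e1 φ p) (e2 φ p) = nuv φ p from rfl]
      rw [show pu φ p = Real.sqrt (Efun φ p) • e1 φ p by
          rw [show e1 φ p = (Real.sqrt (Efun φ p))⁻¹ • pu φ p from rfl, smul_smul,
            mul_inv_cancel₀ hsE.ne', one_smul],
        show pv φ p = Real.sqrt (Gfun φ p) • e2 φ p by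
          rw [show e2 φ p = (Real.sqrt (Gfun φ p))⁻¹ • pv φ p from rfl, smul_smul,
            mul_inv_cancel₀ hsG.ne', one_smul]]
      match_scalars
      · field_simp
        ring
      · field_simp
        ring
      · ring
    have hmain := key e1hat (e1 φ) he1hat he1d he1ext
      ((dot3 (e1 φ p) a / ((1 - ξ * c₁ p) * Real.sqrt (Efun φ p)),
        dot3 (e2 φ p) a / ((1 - ξ * c₂ p) * Real.sqrt (Gfun φ p))),
       dot3 (nuv φ p) a)
    rw [hΦw] at hmain
    rw [hmain]
    show fderiv ℝ (e1 φ) p (dot3 (e1 φ p) a / ((1 - ξ * c₁ p) * Real.sqrt (Efun φ p)),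
      dot3 (e2 φ p) a / ((1 - ξ * c₂ p) * Real.sqrt (Gfun φ p))) = _
    rw [dirV (e1 φ), hD1, hD2, hg1, hg2]
    match_scalars
    · field_simp
      ring
    · field_simp
  · intro a
    have hΦw : fderiv ℝ (PhiMap φ) (p, ξ)
        ((dot3 (e1 φ p) a / ((1 - ξ * c₁ p) * Real.sqrt (Efun φ p)),
          dot3 (e2 φ p) a / ((1 - ξ * c₂ p) * Real.sqrt (Gfun φ p))),
         dot3 (nuv φ p) a) = a := by
      rw [fderiv_PhiMap_apply hU hφ hEpos hGpos hp]
      rw [dirV φ, dirV (nuv φ), (hcurv p hp).1, (hcurv p hp).2]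
      conv_rhs => rw [onb_expand (e1 φ p) (e2 φ p) a he1e1 he2e2 he1e2,
        show cross3 (e1 φ p) (e2 φ p) = nuv φ p from rfl]
      rw [show pu φ p = Real.sqrt (Efun φ p) • e1 φ p by
          rw [show e1 φ p = (Real.sqrt (Efun φ p))⁻¹ • pu φ p from rfl, smul_smul,
            mul_inv_cancel₀ hsE.ne', one_smul],
        show pv φ p = Real.sqrt (Gfun φ p) • e2 φ p by
          rw [show e2 φ p = (Real.sqrt (Gfun φ p))⁻¹ • pv φ p from rfl, smul_smul,
            mul_inv_cancel₀ hsG.ne', one_smul]]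
      match_scalars
      · field_simp
        ring
      · field_simp
        ring
      · ring
    have hmain := key e2hat (e2 φ) he2hat he2d he2ext
      ((dot3 (e1 φ p) a / ((1 - ξ * c₁ p) * Real.sqrt (Efun φ p)),
        dot3 (e2 φ p) a / ((1 - ξ * c₂ p) * Real.sqrt (Gfun φ p))),
       dot3 (nuv φ p) a)
    rw [hΦw] at hmain
    rw [hmain]
    show fderiv ℝ (e2 φ) p (dot3 (e1 φ p) a / ((1 - ξ * c₁ p) * Real.sqrt (Efun φ p)),
      dot3 (e2 φ p) a / ((1 - ξ * c₂ p) * Real.sqrt (Gfun φ p))) = _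
    rw [dirV (e2 φ), hD3, hD4, hg1, hg2]
    match_scalars
    · field_simp
      ring
    · field_simp

end
end

section
/- Let n̂ be the normal extension of the tangent director n to V₀. Then at every point of V₀ one has tr((Dn̂)²) = (tr Dn̂)²; equivalently, the saddle-splay density vanishes identically: div[(Dn̂)n̂ − (div n̂)n̂] = tr((Dn̂)²) − (tr Dn̂)² = 0 on V₀. -/
open MeasureTheory Real Filter

noncomputable section

lemma key_alg (M : Matrix (Fin 3) (Fin 3) ℝ) (a b : V3)
    (ha : ∀ j, ∑ i, a i * M i j = 0) (hb : ∀ i, ∑ j, M i j * b j = 0)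
    (hab : dot3 a b = 0) (haa : dot3 a a = 1) (hbb : dot3 b b = 1) :
    Matrix.trace (M * M) = (Matrix.trace M) ^ 2 := by
  classical
  set c : V3 := cross3 a b with hc
  set Q : Matrix (Fin 3) (Fin 3) ℝ := Matrix.of (fun i j => ![a, b, c] j i) with hQ
  simp only [dot3, Fin.sum_univ_three] at hab haa hbb
  simp only [Fin.sum_univ_three] at ha hb
  have hQQ : Q.transpose * Q = 1 := by
    ext i j
    fin_cases i <;> fin_cases j <;>
      simp only [hQ, hc, cross3, Matrix.mul_apply, Fin.sum_univ_three, Matrix.one_apply,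
        Matrix.transpose_apply, Matrix.of_apply, Matrix.cons_val_zero, Matrix.cons_val_one,
        Matrix.head_cons, Matrix.cons_val_two, Matrix.tail_cons, Fin.mk_zero, Fin.mk_one,
        Matrix.cons_val', Matrix.empty_val', Matrix.cons_val_fin_one] <;>
      norm_num [Fin.ext_iff]
    · linarith [haa]
    · linarith [hab]
    · ring
    · linarith [hab]
    · linarith [hbb]
    · ring
    · ring
    · ring
    · linear_combination (b 0^2 + b 1^2 + b 2^2) * haa + hbb -
        (a 0 * b 0 + a 1 * b 1 + a 2 * b 2) * hab
  have hQQT : Q * Q.transpose = 1 := mul_eq_one_comm.mp hQQ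
  set N : Matrix (Fin 3) (Fin 3) ℝ := Q.transpose * M * Q with hN
  have htr : Matrix.trace N = Matrix.trace M := by
    rw [hN, Matrix.trace_mul_cycle, hQQT, Matrix.one_mul]
  have htr2 : Matrix.trace (N * N) = Matrix.trace (M * M) := by
    have : N * N = Q.transpose * (M * M) * Q := by
      have h : Q * (Q.transpose * M * Q) = M * Q := by
        rw [← Matrix.mul_assoc, ← Matrix.mul_assoc, hQQT, Matrix.one_mul]
      rw [hN, Matrix.mul_assoc (Q.transpose * M) Q (Q.transpose * M * Q), h,
        Matrix.mul_assoc, Matrix.mul_assoc, Matrix.mul_assoc]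
    rw [this, Matrix.trace_mul_cycle, hQQT, Matrix.one_mul]
  have h0 : ∀ j, N 0 j = 0 := by
    intro j
    have e0 := ha 0; have e1 := ha 1; have e2 := ha 2
    simp only [hN, hQ, Matrix.mul_apply, Fin.sum_univ_three, Matrix.transpose_apply,
      Matrix.of_apply, Matrix.cons_val_zero]
    linear_combination (![a,b,c] j 0) * e0 + (![a,b,c] j 1) * e1 + (![a,b,c] j 2) * e2
  have h1 : ∀ i, N i 1 = 0 := by
    intro i
    have e0 := hb 0; have e1 := hb 1; have e2 := hb 2
    simp only [hN, hQ, Matrix.mul_apply, Fin.sum_univ_three, Matrix.transpose_apply,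
      Matrix.of_apply, Matrix.cons_val_one, Matrix.head_cons, Matrix.cons_val_zero]
    linear_combination (![a,b,c] i 0) * e0 + (![a,b,c] i 1) * e1 + (![a,b,c] i 2) * e2
  rw [← htr, ← htr2]
  simp only [Matrix.trace, Matrix.diag, Matrix.mul_apply, Fin.sum_univ_three]
  simp only [h0, h1]
  ring

lemma dot3_smul_smul (r t : ℝ) (u v : V3) : dot3 (r • u) (t • v) = r * t * dot3 u v := by
  simp only [dot3, Pi.smul_apply, smul_eq_mul, Finset.mul_sum]
  exact Finset.sum_congr rfl fun i _ => by ring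

lemma frame_props (u v : V3) (θ : ℝ) (huu : dot3 u u = 1) (hvv : dot3 v v = 1)
    (huv : dot3 u v = 0) :
    dot3 (Real.cos θ • u + Real.sin θ • v) (Real.cos θ • u + Real.sin θ • v) = 1 ∧
    dot3 (cross3 u v) (cross3 u v) = 1 ∧
    dot3 (Real.cos θ • u + Real.sin θ • v) (cross3 u v) = 0 := by
  have hsc := Real.sin_sq_add_cos_sq θ
  simp only [dot3, cross3, Fin.sum_univ_three, Pi.add_apply, Pi.smul_apply, smul_eq_mul,
    Matrix.cons_val_zero, Matrix.cons_val_one, Matrix.head_cons, Matrix.cons_val_two,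
    Matrix.tail_cons] at huu hvv huv ⊢
  refine ⟨?_, ?_, ?_⟩
  · linear_combination (Real.cos θ)^2 * huu + (Real.sin θ)^2 * hvv +
      (2 * Real.cos θ * Real.sin θ) * huv + hsc
  · linear_combination (v 0 * v 0 + v 1 * v 1 + v 2 * v 2) * huu + hvv -
      (u 0 * v 0 + u 1 * v 1 + u 2 * v 2) * huv
  · ring

lemma e_frame (φ : ℝ × ℝ → V3) (p : ℝ × ℝ) (hE : 0 < Efun φ p) (hG : 0 < Gfun φ p)
    (ho : dot3 (pu φ p) (pv φ p) = 0) :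
    dot3 (e1 φ p) (e1 φ p) = 1 ∧ dot3 (e2 φ p) (e2 φ p) = 1 ∧ dot3 (e1 φ p) (e2 φ p) = 0 := by
  refine ⟨?_, ?_, ?_⟩
  · rw [e1, dot3_smul_smul, show dot3 (pu φ p) (pu φ p) = Efun φ p from rfl,
      ← mul_inv, Real.mul_self_sqrt hE.le, inv_mul_cancel₀ hE.ne']
  · rw [e2, dot3_smul_smul, show dot3 (pv φ p) (pv φ p) = Gfun φ p from rfl,
      ← mul_inv, Real.mul_self_sqrt hG.le, inv_mul_cancel₀ hG.ne']
  · rw [e1, e2, dot3_smul_smul, ho, mul_zero]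


/-- For the normally extended director, `tr((Dn̂)²) = (tr Dn̂)²` on `V₀`;
equivalently the saddle-splay density vanishes:
`div[(Dn̂)n̂ − (div n̂)n̂] = tr((Dn̂)²) − (tr Dn̂)² = 0`. -/
theorem saddle_splay_density_vanishes
    (U : Set (ℝ × ℝ)) (hU : IsOpen U)
    (φ : ℝ × ℝ → V3) (hφ : ContDiffOn ℝ (⊤ : ℕ∞) φ U)
    (hEpos : ∀ p ∈ U, 0 < Efun φ p) (hGpos : ∀ p ∈ U, 0 < Gfun φ p)
    (horth : ∀ p ∈ U, dot3 (pu φ p) (pv φ p) = 0)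
    (c₁ c₂ : ℝ × ℝ → ℝ) (hc₁ : ContDiffOn ℝ (⊤ : ℕ∞) c₁ U) (hc₂ : ContDiffOn ℝ (⊤ : ℕ∞) c₂ U)
    (hcurv : ∀ p ∈ U, pu (nuv φ) p = (-c₁ p) • pu φ p ∧ pv (nuv φ) p = (-c₂ p) • pv φ p)
    (h₀ : ℝ) (hh₀ : 0 < h₀)
    (hreg : ∀ p ∈ U, ∀ ξ ∈ Set.Ioo (-(h₀ / 2)) (h₀ / 2), 0 < 1 - ξ * c₁ p ∧ 0 < 1 - ξ * c₂ p)
    (V₀ : Set V3) (hV₀ : IsOpen V₀)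
    (hbij : Set.BijOn (PhiMap φ) (U ×ˢ Set.Ioo (-(h₀ / 2)) (h₀ / 2)) V₀)
    (Ψ : V3 → (ℝ × ℝ) × ℝ) (hΨ : ContDiffOn ℝ (⊤ : ℕ∞) Ψ V₀)
    (hΨΦ : ∀ x ∈ U ×ˢ Set.Ioo (-(h₀ / 2)) (h₀ / 2), Ψ (PhiMap φ x) = x)
    (α : ℝ × ℝ → ℝ) (hα : ContDiffOn ℝ (⊤ : ℕ∞) α U)
    (nhat : V3 → V3) (hnhat : ContDiffOn ℝ (⊤ : ℕ∞) nhat V₀)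
    (hnext : ∀ p ∈ U, ∀ ξ ∈ Set.Ioo (-(h₀ / 2)) (h₀ / 2), nhat (PhiMap φ (p, ξ)) = ndir φ α p) :
    ∀ x ∈ V₀,
      Matrix.trace (Dmat3 nhat x * Dmat3 nhat x) = (Matrix.trace (Dmat3 nhat x)) ^ 2 ∧
        div3 (fun y => (Dmat3 nhat y).mulVec (nhat y) - div3 nhat y • nhat y) x =
          Matrix.trace (Dmat3 nhat x * Dmat3 nhat x) - (Matrix.trace (Dmat3 nhat x)) ^ 2 ∧
        div3 (fun y => (Dmat3 nhat y).mulVec (nhat y) - div3 nhat y • nhat y) x = 0 := by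
  classical
  intro x hx
  obtain ⟨q, hq, hqx⟩ := hbij.surjOn hx
  obtain ⟨p, ξ⟩ := q
  obtain ⟨hp, hξ⟩ := hq
  -- frame facts
  have hframe := e_frame φ p (hEpos p hp) (hGpos p hp) (horth p hp)
  have hfp := frame_props (e1 φ p) (e2 φ p) (α p) hframe.1 hframe.2.1 hframe.2.2
  have hax : nhat x = ndir φ α p := by rw [← hqx]; exact hnext p hp ξ hξ
  have hunit : ∀ y ∈ V₀, dot3 (nhat y) (nhat y) = 1 := by
    intro y hy
    obtain ⟨r, hr, rfl⟩ := hbij.surjOn hy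
    have h1 := e_frame φ r.1 (hEpos _ hr.1) (hGpos _ hr.1) (horth _ hr.1)
    have h2 := (frame_props (e1 φ r.1) (e2 φ r.1) (α r.1) h1.1 h1.2.1 h1.2.2).1
    have h3 : nhat (PhiMap φ r) = ndir φ α r.1 := hnext r.1 hr.1 r.2 hr.2
    rw [h3]; exact h2
  -- differentiability setup
  have hcd : ContDiffAt ℝ (⊤ : ℕ∞) nhat x := hnhat.contDiffAt (hV₀.mem_nhds hx)
  have hdnh : DifferentiableAt ℝ nhat x := hcd.differentiableAt (by simp)
  have hfd : ContDiffAt ℝ 1 (fderiv ℝ nhat) x := hcd.fderiv_right (by exact WithTop.coe_le_coe.mpr le_top)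
  have hdD : DifferentiableAt ℝ (fderiv ℝ nhat) x := hfd.differentiableAt one_ne_zero
  have hD2 : HasFDerivAt (fderiv ℝ nhat) (fderiv ℝ (fderiv ℝ nhat) x) x := hdD.hasFDerivAt
  have hEv : ∀ᶠ y in nhds x, HasFDerivAt nhat (fderiv ℝ nhat y) y := by
    filter_upwards [hV₀.mem_nhds hx] with y hy using
      ((hnhat.contDiffAt (hV₀.mem_nhds hy)).differentiableAt (by simp)).hasFDerivAt
  have hsymm : ∀ v w, fderiv ℝ (fderiv ℝ nhat) x v w = fderiv ℝ (fderiv ℝ nhat) x w v :=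
    fun v w => second_derivative_symmetric_of_eventually hEv hD2 v w
  have hAj : ∀ j : Fin 3, HasFDerivAt (fun y => fderiv ℝ nhat y (Pi.single j 1))
      ((fderiv ℝ (fderiv ℝ nhat) x).flip (Pi.single j 1)) x := by
    intro j
    have h := hD2.clm_apply (hasFDerivAt_const (Pi.single j (1:ℝ) : V3) x)
    have he : (fderiv ℝ nhat x).comp (0 : V3 →L[ℝ] V3) +
        ((fderiv ℝ (fderiv ℝ nhat) x).flip (Pi.single j 1)) =
        (fderiv ℝ (fderiv ℝ nhat) x).flip (Pi.single j 1) := by ext v; simp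
    rwa [he] at h
  have hAji : ∀ (j i : Fin 3), HasFDerivAt (fun y => fderiv ℝ nhat y (Pi.single j 1) i)
      ((ContinuousLinearMap.proj i).comp
        ((fderiv ℝ (fderiv ℝ nhat) x).flip (Pi.single j 1))) x :=
    fun j i => by
      have h := (hasFDerivAt_apply (𝕜 := ℝ) i (fderiv ℝ nhat x (Pi.single j 1))).comp x (hAj j)
      exact h
  have hNi : ∀ i : Fin 3, HasFDerivAt (fun y => nhat y i)
      ((ContinuousLinearMap.proj i).comp (fderiv ℝ nhat x)) x :=
    fun i => (hasFDerivAt_apply (𝕜 := ℝ) i (nhat x)).comp x hdnh.hasFDerivAt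
  -- the derivative of nhat in the normal direction vanishes
  have hεpos : 0 < min (ξ + h₀ / 2) (h₀ / 2 - ξ) := by
    rcases hξ with ⟨hξ1, hξ2⟩
    apply lt_min <;> linarith
  have hball : ∀ t : ℝ, |t| < min (ξ + h₀ / 2) (h₀ / 2 - ξ) →
      nhat (x + t • nuv φ p) = ndir φ α p := by
    intro t ht
    rcases abs_lt.mp ht with ⟨ht1, ht2⟩
    have h1 : -(ξ + h₀ / 2) < t := by
      have := min_le_left (ξ + h₀ / 2) (h₀ / 2 - ξ); linarith
    have h2 : t < h₀ / 2 - ξ := lt_of_lt_of_le ht2 (min_le_right _ _)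
    have hmem : ξ + t ∈ Set.Ioo (-(h₀ / 2)) (h₀ / 2) := ⟨by linarith, by linarith⟩
    have hxt : x + t • nuv φ p = PhiMap φ (p, ξ + t) := by
      rw [← hqx]
      show φ p + ξ • nuv φ p + t • nuv φ p = φ p + (ξ + t) • nuv φ p
      rw [add_smul, add_assoc]
    rw [hxt]
    exact hnext p hp (ξ + t) hmem
  have hDb : fderiv ℝ nhat x (nuv φ p) = 0 := by
    have h1 : HasDerivAt (fun t : ℝ => x + t • nuv φ p) (nuv φ p) 0 := by
      simpa using ((hasDerivAt_id (0 : ℝ)).smul_const (nuv φ p)).const_add x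
    have h2 : HasDerivAt (fun t : ℝ => nhat (x + t • nuv φ p))
        (fderiv ℝ nhat x (nuv φ p)) 0 := by
      have hg : HasFDerivAt nhat (fderiv ℝ nhat x) ((fun t : ℝ => x + t • nuv φ p) 0) := by
        simpa using hdnh.hasFDerivAt
      exact hg.comp_hasDerivAt 0 h1
    have h3 : HasDerivAt (fun t : ℝ => nhat (x + t • nuv φ p)) 0 0 := by
      have hev : (fun t : ℝ => nhat (x + t • nuv φ p)) =ᶠ[nhds (0 : ℝ)]
          fun _ => ndir φ α p := by
        filter_upwards [Metric.ball_mem_nhds (0 : ℝ) hεpos] with t ht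
        exact hball t (by simpa [Real.dist_eq] using ht)
      exact (hasDerivAt_const (0 : ℝ) (ndir φ α p)).congr_of_eventuallyEq hev
    exact h2.unique h3
  -- the gradient of |nhat|² vanishes
  have hvec : ∀ j : Fin 3, ∑ i, nhat x i * fderiv ℝ nhat x (Pi.single j 1) i = 0 := by
    have hqd : HasFDerivAt (fun y => dot3 (nhat y) (nhat y))
        (∑ i, (nhat x i • ((ContinuousLinearMap.proj i).comp (fderiv ℝ nhat x)) +
          nhat x i • ((ContinuousLinearMap.proj i).comp (fderiv ℝ nhat x)))) x := by
      have h : (fun y => dot3 (nhat y) (nhat y)) = fun y => ∑ i, nhat y i * nhat y i := rfl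
      rw [h]
      exact HasFDerivAt.fun_sum fun i _ => (hNi i).fun_mul (hNi i)
    have hev : (fun y => dot3 (nhat y) (nhat y)) =ᶠ[nhds x] fun _ => (1 : ℝ) := by
      filter_upwards [hV₀.mem_nhds hx] with y hy using hunit y hy
    have h0 : (∑ i, (nhat x i • ((ContinuousLinearMap.proj i).comp (fderiv ℝ nhat x)) +
        nhat x i • ((ContinuousLinearMap.proj i).comp (fderiv ℝ nhat x)))) = 0 := by
      rw [← hqd.fderiv, hev.fderiv_eq]
      exact fderiv_const_apply 1
    intro j
    have h1 := congrArg (fun L : V3 →L[ℝ] ℝ => L (Pi.single j 1)) h0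
    simp only [ContinuousLinearMap.coe_sum', Finset.sum_apply, ContinuousLinearMap.add_apply,
      ContinuousLinearMap.smul_apply, ContinuousLinearMap.comp_apply,
      ContinuousLinearMap.proj_apply, smul_eq_mul, ContinuousLinearMap.zero_apply] at h1
    rw [Finset.sum_add_distrib] at h1
    linarith [h1]
  -- hypotheses for the algebraic lemma
  have ha : ∀ j, ∑ i, nhat x i * Dmat3 nhat x i j = 0 := by
    intro j; simpa [Dmat3, pd] using hvec j
  have hbsum : nuv φ p = ∑ j, nuv φ p j • (Pi.single j (1 : ℝ) : V3) := by
    funext k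
    fin_cases k <;> simp [Fin.sum_univ_three, Pi.single_apply]
  have hb : ∀ i, ∑ j, Dmat3 nhat x i j * nuv φ p j = 0 := by
    intro i
    have h2 : fderiv ℝ nhat x (nuv φ p) =
        ∑ j, nuv φ p j • fderiv ℝ nhat x (Pi.single j 1) := by
      conv_lhs => rw [hbsum]
      rw [map_sum]
      exact Finset.sum_congr rfl fun j _ => ContinuousLinearMap.map_smul _ _ _
    have h3 : (∑ j, nuv φ p j • fderiv ℝ nhat x (Pi.single j 1)) i = 0 := by
      rw [← h2, hDb]; rfl
    rw [Finset.sum_apply] at h3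
    simp only [Pi.smul_apply, smul_eq_mul] at h3
    rw [← h3]
    exact Finset.sum_congr rfl fun j _ => by simp [Dmat3, pd]; ring
  have haa : dot3 (nhat x) (nhat x) = 1 := by rw [hax]; exact hfp.1
  have hbb : dot3 (nuv φ p) (nuv φ p) = 1 := hfp.2.1
  have hab : dot3 (nhat x) (nuv φ p) = 0 := by rw [hax]; exact hfp.2.2
  have part1 : Matrix.trace (Dmat3 nhat x * Dmat3 nhat x) = (Matrix.trace (Dmat3 nhat x)) ^ 2 :=
    key_alg (Dmat3 nhat x) (nhat x) (nuv φ p) ha hb hab haa hbb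
  -- the divergence identity
  have hφd : ∀ i : Fin 3, HasFDerivAt
      (fun y => (∑ j, fderiv ℝ nhat y (Pi.single j 1) i * nhat y j) -
        (∑ j, fderiv ℝ nhat y (Pi.single j 1) j) * nhat y i)
      ((∑ j, ((fderiv ℝ nhat x (Pi.single j 1) i) •
          ((ContinuousLinearMap.proj j).comp (fderiv ℝ nhat x)) +
        (nhat x j) • ((ContinuousLinearMap.proj i).comp
          ((fderiv ℝ (fderiv ℝ nhat) x).flip (Pi.single j 1))))) -
       ((∑ j, fderiv ℝ nhat x (Pi.single j 1) j) •
          ((ContinuousLinearMap.proj i).comp (fderiv ℝ nhat x)) +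
        (nhat x i) • (∑ j, (ContinuousLinearMap.proj j).comp
          ((fderiv ℝ (fderiv ℝ nhat) x).flip (Pi.single j 1))))) x :=
    fun i => (HasFDerivAt.fun_sum fun j _ => (hAji j i).fun_mul (hNi j)).fun_sub
      ((HasFDerivAt.fun_sum fun j _ => hAji j j).fun_mul (hNi i))
  have heq : (fun y => (Dmat3 nhat y).mulVec (nhat y) - div3 nhat y • nhat y) =
      (fun y (i : Fin 3) => (∑ j, fderiv ℝ nhat y (Pi.single j 1) i * nhat y j) -
        (∑ j, fderiv ℝ nhat y (Pi.single j 1) j) * nhat y i) := by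
    funext y i
    simp [Dmat3, div3, pd, Matrix.mulVec, dotProduct]
  have hFd : HasFDerivAt (fun y => (Dmat3 nhat y).mulVec (nhat y) - div3 nhat y • nhat y)
      (ContinuousLinearMap.pi fun i =>
        ((∑ j, ((fderiv ℝ nhat x (Pi.single j 1) i) •
            ((ContinuousLinearMap.proj j).comp (fderiv ℝ nhat x)) +
          (nhat x j) • ((ContinuousLinearMap.proj i).comp
            ((fderiv ℝ (fderiv ℝ nhat) x).flip (Pi.single j 1))))) -
         ((∑ j, fderiv ℝ nhat x (Pi.single j 1) j) •
            ((ContinuousLinearMap.proj i).comp (fderiv ℝ nhat x)) +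
          (nhat x i) • (∑ j, (ContinuousLinearMap.proj j).comp
            ((fderiv ℝ (fderiv ℝ nhat) x).flip (Pi.single j 1)))))) x := by
    rw [heq]
    exact hasFDerivAt_pi.mpr hφd
  have hc : ∑ i, ∑ j, nhat x i *
        fderiv ℝ (fderiv ℝ nhat) x (Pi.single i 1) (Pi.single j 1) j
      = ∑ i, ∑ j, nhat x j *
        fderiv ℝ (fderiv ℝ nhat) x (Pi.single i 1) (Pi.single j 1) i := by
    rw [Finset.sum_comm]
    refine Finset.sum_congr rfl fun i _ => Finset.sum_congr rfl fun j _ => ?_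
    rw [congrFun (hsymm (Pi.single j 1) (Pi.single i 1)) i]
  have part2 : div3 (fun y => (Dmat3 nhat y).mulVec (nhat y) - div3 nhat y • nhat y) x =
      Matrix.trace (Dmat3 nhat x * Dmat3 nhat x) - (Matrix.trace (Dmat3 nhat x)) ^ 2 := by
    rw [show div3 (fun y => (Dmat3 nhat y).mulVec (nhat y) - div3 nhat y • nhat y) x
        = ∑ i, fderiv ℝ (fun y => (Dmat3 nhat y).mulVec (nhat y) - div3 nhat y • nhat y) x
            (Pi.single i 1) i from rfl, hFd.fderiv]
    simp only [ContinuousLinearMap.pi_apply, ContinuousLinearMap.sub_apply,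
      ContinuousLinearMap.add_apply, ContinuousLinearMap.coe_sum', Finset.sum_apply,
      ContinuousLinearMap.smul_apply, ContinuousLinearMap.comp_apply,
      ContinuousLinearMap.proj_apply, ContinuousLinearMap.flip_apply, smul_eq_mul]
    simp only [Matrix.trace, Matrix.mul_apply, Matrix.diag, Dmat3, pd, Matrix.of_apply]
    simp only [Fin.sum_univ_three] at hc ⊢
    linear_combination -hc
  exact ⟨part1, part2, by rw [part2, part1, sub_self]⟩

end
end
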